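/- A long virtual knot K is virtually slice if and only if its closure K̄ is virtually slice. -/

import Mathlib

/- ----------------------------------------------------------------------------
A combinatorial model of virtual link diagrams via Gauss codes.

A virtual link diagram is faithfully encoded by the Gauss codes of its
components: each passage through a classical crossing is recorded by a symbol
carrying the crossing label, an over/under bit, and the sign of the crossing.
Virtual crossings are artifacts of drawing a Gauss code in the plane and are
invisible in this encoding (by the detour move).  Generalised Reidemeister
equivalence of virtual link diagrams corresponds exactly to the moves `RMove`
below, where for the third Reidemeister move the admissible configurations of
over/under bits, signs, and orders along the three strands are those realised by
a planar triangle picture.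

Long virtual knots are encoded by marking the point at infinity of the long
component with the extra symbol `star`, which no move may touch or rotate past.

Cobordisms of diagrams follow Kauffman: movies of generalised Reidemeister
moves, saddle moves (which merge two components or split one, compatibly with
orientations), births and deaths of crossingless circles.  A concordance is a
cobordism in which the number of saddles equals the number of births plus the
number of deaths.
---------------------------------------------------------------------------- -/

namespace VKnot

/-- A symbol of a Gauss code: a passage through a classical crossing (crossing
label, over/under bit, sign bit with `true` = positive) or the marker `star` for
the point at infinity of a long component. -/
inductive Sym
  | cross (id : ℕ) (isOver : Bool) (sign : Bool)
  | star
deriving DecidableEq, BEq, Repr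

/-- One component of a virtual link diagram: its Gauss word (a cyclic word,
recorded as a list; cyclic rotation is one of the moves below). -/
abbrev Comp := List Sym

/-- A virtual link diagram: the list of Gauss words of its components. -/
abbrev VLD := List Comp

/-- The crossing labels occurring in a diagram. -/
def ids (D : VLD) : List ℕ :=
  D.flatten.filterMap (fun s => match s with | .cross i _ _ => some i | .star => none)

/-- Relabelling the crossings of a diagram. -/
def relabel (f : ℕ → ℕ) (D : VLD) : VLD :=
  D.map (List.map (fun s => match s with
    | .cross i b c => .cross (f i) b c
    | .star => .star))

/-- Well-formedness of a diagram: each crossing label occurs exactly twice, once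
as an over-passage and once as an under-passage, both with the same sign. -/
def WF (D : VLD) : Prop :=
  ∀ i : ℕ,
    (D.flatten.filter (fun s => match s with | .cross j _ _ => j == i | .star => false)) = []
    ∨ ∃ s : Bool,
      (D.flatten.filter (fun s => match s with | .cross j _ _ => j == i | .star => false)).Perm
        [Sym.cross i true s, Sym.cross i false s]

/-! ### The third Reidemeister move

The local picture of a third Reidemeister move consists of three strands
pairwise crossing in a triangle, one strand passing over the other two, one
under the other two.  In the Gauss code the move swaps two adjacent symbols on
each of the three strands.  Which over/under bits, signs, and orders along the
strands can occur is dictated by planarity of the local picture; the equations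
below are exactly the realisability conditions of a planar triangle
(`s₁₂ = h₁₂δ₁δ₂`, `s₁₃ = -h₁₃δ₁δ₃`, `s₂₃ = -h₂₃δ₂δ₃` in `±1` notation, with the
height tournament transitive).  Here for booleans `==` plays the role of the
product of signs and `!` of negation. -/

/-- The labelled form of an admissible Reidemeister III configuration.
`t1 t2 t3` are the ordered pairs of adjacent symbols on the three strands;
crossing `p` joins strands 1,2; crossing `q` joins strands 1,3; crossing `r`
joins strands 2,3.  `h₁₂ = true` means strand 1 passes over strand 2, etc.;
`δ₁` records whether strand 1 meets `p` before `q`, `δ₂` whether strand 2 meets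
`p` before `r`, `δ₃` whether strand 3 meets `r` before `q`. -/
def R3Triple (t1 t2 t3 : Sym × Sym) : Prop :=
  ∃ (p q r : ℕ) (h12 h13 h23 sp sq sr : Bool) (δ1 δ2 δ3 : Bool),
    p ≠ q ∧ p ≠ r ∧ q ≠ r ∧
    t1 = (if δ1 then ((Sym.cross p h12 sp, Sym.cross q h13 sq) : Sym × Sym)
          else (Sym.cross q h13 sq, Sym.cross p h12 sp)) ∧
    t2 = (if δ2 then ((Sym.cross p (!h12) sp, Sym.cross r h23 sr) : Sym × Sym)
          else (Sym.cross r h23 sr, Sym.cross p (!h12) sp)) ∧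
    t3 = (if δ3 then ((Sym.cross r (!h23) sr, Sym.cross q (!h13) sq) : Sym × Sym)
          else (Sym.cross q (!h13) sq, Sym.cross r (!h23) sr)) ∧
    -- the height tournament is transitive (some strand is on top, some at the bottom):
    ¬((h12 = true ∧ h23 = true ∧ h13 = false) ∨ (h12 = false ∧ h23 = false ∧ h13 = true)) ∧
    -- planarity of the triangle:
    sp = (h12 == (δ1 == δ2)) ∧
    sq = !(h13 == (δ1 == δ3)) ∧
    sr = !(h23 == (δ2 == δ3))

/-- An admissible Reidemeister III configuration: some labelling of the three
strand segments satisfies `R3Triple`. -/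
def R3Legal (u1 u2 u3 : Sym × Sym) : Prop :=
  ∃ t1 t2 t3 : Sym × Sym, [t1, t2, t3].Perm [u1, u2, u3] ∧ R3Triple t1 t2 t3

/-- Generalised Reidemeister moves on Gauss codes of virtual link diagrams (one
direction each; the symmetric closure is taken in `LStep`).

* `perm`   : reordering the components;
* `rot`    : cyclic rotation of the basepoint of a (round) component;
* `relabel`: renaming the crossing labels;
* `r1`     : removing a kink (all four variants);
* `r2_same`, `r2_diff` : a second Reidemeister move, the two strands lying on one
  or on two components (both the direct and the reversed variant, with opposite
  signs);
* `r3_*`   : a third Reidemeister move, the three strands lying on one, two or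
  three components, in an admissible configuration.

The purely virtual and mixed moves are invisible in the Gauss code. -/
inductive RMove : VLD → VLD → Prop
  | perm {D D' : VLD} (h : D.Perm D') : RMove D D'
  | rot (a : Sym) (w : Comp) (D : VLD) (h : Sym.star ∉ a :: w) :
      RMove ((a :: w) :: D) ((w ++ [a]) :: D)
  | relabel (f : ℕ → ℕ) (hf : Function.Injective f) (D : VLD) :
      RMove D (relabel f D)
  | r1 (c : ℕ) (b b' s : Bool) (hb : b ≠ b') (x y : Comp) (D : VLD)
      (hfresh : c ∉ ids ((x ++ y) :: D)) :
      RMove ((x ++ [.cross c b s, .cross c b' s] ++ y) :: D) ((x ++ y) :: D)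
  | r2_same (c d : ℕ) (b s : Bool) (P : Comp)
      (hP : P = [Sym.cross c (!b) s, Sym.cross d (!b) (!s)] ∨
            P = [Sym.cross d (!b) (!s), Sym.cross c (!b) s])
      (hcd : c ≠ d) (x y z : Comp) (D : VLD)
      (hfc : c ∉ ids ((x ++ y ++ z) :: D)) (hfd : d ∉ ids ((x ++ y ++ z) :: D)) :
      RMove ((x ++ [Sym.cross c b s, Sym.cross d b (!s)] ++ y ++ P ++ z) :: D)
            ((x ++ y ++ z) :: D)
  | r2_diff (c d : ℕ) (b s : Bool) (P : Comp)
      (hP : P = [Sym.cross c (!b) s, Sym.cross d (!b) (!s)] ∨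
            P = [Sym.cross d (!b) (!s), Sym.cross c (!b) s])
      (hcd : c ≠ d) (x y u v : Comp) (D : VLD)
      (hfc : c ∉ ids ((x ++ y) :: (u ++ v) :: D)) (hfd : d ∉ ids ((x ++ y) :: (u ++ v) :: D)) :
      RMove ((x ++ [Sym.cross c b s, Sym.cross d b (!s)] ++ y) :: (u ++ P ++ v) :: D)
            ((x ++ y) :: (u ++ v) :: D)
  | r3_1 (a1 a2 b1 b2 c1 c2 : Sym) (h : R3Legal (a1, a2) (b1, b2) (c1, c2))
      (x y z w : Comp) (D : VLD) :
      RMove ((x ++ [a1, a2] ++ y ++ [b1, b2] ++ z ++ [c1, c2] ++ w) :: D)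
            ((x ++ [a2, a1] ++ y ++ [b2, b1] ++ z ++ [c2, c1] ++ w) :: D)
  | r3_2 (a1 a2 b1 b2 c1 c2 : Sym) (h : R3Legal (a1, a2) (b1, b2) (c1, c2))
      (x y z u v : Comp) (D : VLD) :
      RMove ((x ++ [a1, a2] ++ y ++ [b1, b2] ++ z) :: (u ++ [c1, c2] ++ v) :: D)
            ((x ++ [a2, a1] ++ y ++ [b2, b1] ++ z) :: (u ++ [c2, c1] ++ v) :: D)
  | r3_3 (a1 a2 b1 b2 c1 c2 : Sym) (h : R3Legal (a1, a2) (b1, b2) (c1, c2))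
      (x y u v t w : Comp) (D : VLD) :
      RMove ((x ++ [a1, a2] ++ y) :: (u ++ [b1, b2] ++ v) :: (t ++ [c1, c2] ++ w) :: D)
            ((x ++ [a2, a1] ++ y) :: (u ++ [b2, b1] ++ v) :: (t ++ [c2, c1] ++ w) :: D)

/-- The kinds of elementary steps in a cobordism movie. -/
inductive Lab
  | rmove | saddle | birth | death
deriving DecidableEq, BEq, Repr

/-- A labelled elementary step between virtual link diagrams: a generalised
Reidemeister move (in either direction), an (orientation-compatible) saddle move
merging two components or splitting one, the birth of a crossingless circle, or
the death of a crossingless circle. -/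
inductive LStep : Lab → VLD → VLD → Prop
  | rmoveF {D D' : VLD} : RMove D D' → LStep .rmove D D'
  | rmoveB {D D' : VLD} : RMove D' D → LStep .rmove D D'
  | saddle_merge (x y z : Comp) (D : VLD) (h : Sym.star ∉ y) :
      LStep .saddle ((x ++ z) :: y :: D) ((x ++ y ++ z) :: D)
  | saddle_split (x y z : Comp) (D : VLD) (h : Sym.star ∉ y) :
      LStep .saddle ((x ++ y ++ z) :: D) ((x ++ z) :: y :: D)
  | birth (D : VLD) : LStep .birth D ([] :: D)
  | death (D : VLD) : LStep .death ([] :: D) D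

/-- `IsMovie D m D'`: the movie `m` (a list of labelled steps with their
resulting diagrams) transforms `D` into `D'`. -/
def IsMovie : VLD → List (Lab × VLD) → VLD → Prop
  | D, [], D' => D = D'
  | D, (l, E) :: m, D' => LStep l D E ∧ IsMovie E m D'

/-- The number of steps of a given kind in a movie. -/
def countLab (l : Lab) (m : List (Lab × VLD)) : ℕ := (m.filter (fun p => p.1 == l)).length

/-- Concordance of virtual link diagrams (Kauffman): a movie of generalised
Reidemeister moves, saddles, births and deaths in which the number of saddle
moves equals the total number of births and deaths (so that the trace surface
consists of annuli). -/
def Concordant (D D' : VLD) : Prop :=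
  ∃ m : List (Lab × VLD), IsMovie D m D' ∧
    countLab .saddle m = countLab .birth m + countLab .death m

/-- A long virtual knot is recorded by the Gauss word of its long component,
read from `-∞` to `+∞`; as a diagram it is the component `star :: w` (with the
point at infinity marked by `star`), and further round components may appear
during cobordisms. -/
def longDiagram (w : List Sym) : VLD := [Sym.star :: w]

/-- Virtual concordance of long virtual knots. -/
def LongConcordant (w w' : List Sym) : Prop :=
  Concordant (longDiagram w) (longDiagram w')

/-- A long virtual knot is virtually slice if it is virtually concordant to the
long unknot (the empty Gauss word). -/
def LongSlice (w : List Sym) : Prop := LongConcordant w []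

/-- The closure of a long virtual knot: the same Gauss word, read as the cyclic
word of a round virtual knot diagram. -/
def closure (w : List Sym) : VLD := [w]

/-- A round virtual knot diagram is virtually slice if it is virtually
concordant to the unknot. -/
def RoundSlice (D : VLD) : Prop := Concordant D [([] : Comp)]

/-
Every step of a movie survives deletion of the marker `star`: the symbols a Reidemeister move
creates, deletes or swaps are crossings, and a saddle only requires `star` to be absent from the
piece it cuts off. So a long concordance of `w` becomes a round one of its closure. Conversely, a
saddle splits `star :: w` into `w` and the crossingless circle `[star]`; this circle rides along
unchanged beside a round concordance of the closure with the unknot, and a final death of the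
unknot leaves `[star]`, the long unknot. The extra saddle is balanced by the extra death.
-/

def noStar (c : Comp) : Comp := c.filter (· ≠ Sym.star)

def delStar (D : VLD) : VLD := D.map noStar

@[simp] lemma noStar_nil : noStar [] = [] := rfl

@[simp] lemma noStar_append (l l' : Comp) : noStar (l ++ l') = noStar l ++ noStar l' :=
  List.filter_append ..

@[simp] lemma noStar_cons_star (l : Comp) : noStar (.star :: l) = noStar l := by
  simp [noStar]

lemma noStar_cons_of_ne_star {a : Sym} (ha : a ≠ .star) (l : Comp) :
    noStar (a :: l) = a :: noStar l := by
  simp [noStar, ha]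

@[simp] lemma noStar_cons_cross (i : ℕ) (b s : Bool) (l : Comp) :
    noStar (.cross i b s :: l) = .cross i b s :: noStar l :=
  noStar_cons_of_ne_star Sym.noConfusion l

lemma star_not_mem_noStar (l : Comp) : Sym.star ∉ noStar l := by
  simp [noStar]

lemma noStar_eq_self {l : Comp} (h : Sym.star ∉ l) : noStar l = l :=
  List.filter_eq_self.2 fun a ha => by simpa using ne_of_mem_of_not_mem ha h

@[simp] lemma delStar_cons (c : Comp) (D : VLD) : delStar (c :: D) = noStar c :: delStar D := rfl

lemma ids_delStar (D : VLD) : ids (delStar D) = ids D := by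
  induction D with
  | nil => rfl
  | cons c D ih =>
    simp only [ids, delStar_cons, List.flatten_cons, List.filterMap_append] at ih ⊢
    rw [ih]
    congr 1
    induction c with
    | nil => rfl
    | cons a c ihc => cases a <;> simpa using ihc

lemma not_mem_ids_delStar {i : ℕ} {D : VLD} (h : i ∉ ids D) : i ∉ ids (delStar D) :=
  ids_delStar D ▸ h

lemma delStar_relabel (f : ℕ → ℕ) (D : VLD) : delStar (relabel f D) = relabel f (delStar D) := by
  simp only [delStar, relabel, List.map_map]
  congr 1
  funext c
  induction c with
  | nil => rfl
  | cons a c ih => cases a <;> simpa using ih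

lemma R3Triple.ne_star {t1 t2 t3 : Sym × Sym} (h : R3Triple t1 t2 t3) :
    ∀ t ∈ [t1, t2, t3], t.1 ≠ .star ∧ t.2 ≠ .star := by
  obtain ⟨p, q, r, h12, h13, h23, sp, sq, sr, δ1, δ2, δ3, -, -, -, rfl, rfl, rfl, -⟩ := h
  cases δ1 <;> cases δ2 <;> cases δ3 <;> simp

lemma R3Legal.ne_star {a1 a2 b1 b2 c1 c2 : Sym} (h : R3Legal (a1, a2) (b1, b2) (c1, c2)) :
    a1 ≠ .star ∧ a2 ≠ .star ∧ b1 ≠ .star ∧ b2 ≠ .star ∧ c1 ≠ .star ∧ c2 ≠ .star := by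
  obtain ⟨t1, t2, t3, hperm, ht⟩ := h
  have hne := fun u hu => ht.ne_star u (hperm.mem_iff.2 hu)
  simp only [List.mem_cons, List.not_mem_nil, or_false, forall_eq_or_imp, forall_eq] at hne
  tauto

lemma RMove.delStar {D D' : VLD} (h : RMove D D') : RMove (delStar D) (delStar D') := by
  cases h with
  | perm h => exact .perm (h.map _)
  | rot a w D h =>
    have ha : a ≠ .star := fun ha => h (ha ▸ List.mem_cons_self)
    simpa [noStar_cons_of_ne_star ha] using
      RMove.rot a (noStar w) (VKnot.delStar D) (by simpa [ha.symm] using star_not_mem_noStar w)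
  | relabel f hf D => simpa [delStar_relabel] using RMove.relabel f hf (VKnot.delStar D)
  | r1 c b b' s hb x y D hfresh =>
    simpa using RMove.r1 c b b' s hb (noStar x) (noStar y) (VKnot.delStar D)
      (by simpa using not_mem_ids_delStar hfresh)
  | r2_same c d b s P hP hcd x y z D hfc hfd =>
    have hP' : noStar P = P := by rcases hP with rfl | rfl <;> simp
    simpa [hP'] using RMove.r2_same c d b s P hP hcd (noStar x) (noStar y) (noStar z)
      (VKnot.delStar D) (by simpa using not_mem_ids_delStar hfc)
      (by simpa using not_mem_ids_delStar hfd)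
  | r2_diff c d b s P hP hcd x y u v D hfc hfd =>
    have hP' : noStar P = P := by rcases hP with rfl | rfl <;> simp
    simpa [hP'] using RMove.r2_diff c d b s P hP hcd (noStar x) (noStar y) (noStar u)
      (noStar v) (VKnot.delStar D) (by simpa using not_mem_ids_delStar hfc)
      (by simpa using not_mem_ids_delStar hfd)
  | r3_1 a1 a2 b1 b2 c1 c2 h x y z w D =>
    obtain ⟨_, _, _, _, _, _⟩ := h.ne_star
    simpa [noStar_cons_of_ne_star, *] using RMove.r3_1 a1 a2 b1 b2 c1 c2 h (noStar x) (noStar y)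
      (noStar z) (noStar w) (VKnot.delStar D)
  | r3_2 a1 a2 b1 b2 c1 c2 h x y z u v D =>
    obtain ⟨_, _, _, _, _, _⟩ := h.ne_star
    simpa [noStar_cons_of_ne_star, *] using RMove.r3_2 a1 a2 b1 b2 c1 c2 h (noStar x) (noStar y)
      (noStar z) (noStar u) (noStar v) (VKnot.delStar D)
  | r3_3 a1 a2 b1 b2 c1 c2 h x y u v t w D =>
    obtain ⟨_, _, _, _, _, _⟩ := h.ne_star
    simpa [noStar_cons_of_ne_star, *] using RMove.r3_3 a1 a2 b1 b2 c1 c2 h (noStar x) (noStar y)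
      (noStar u) (noStar v) (noStar t) (noStar w) (VKnot.delStar D)

lemma LStep.delStar {l : Lab} {D D' : VLD} (h : LStep l D D') :
    LStep l (delStar D) (delStar D') := by
  cases h with
  | rmoveF h => exact .rmoveF h.delStar
  | rmoveB h => exact .rmoveB h.delStar
  | saddle_merge x y z D _ =>
    simpa using LStep.saddle_merge (noStar x) (noStar y) (noStar z) (VKnot.delStar D)
      (star_not_mem_noStar y)
  | saddle_split x y z D _ =>
    simpa using LStep.saddle_split (noStar x) (noStar y) (noStar z) (VKnot.delStar D)
      (star_not_mem_noStar y)
  | birth D => exact .birth _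
  | death D => exact .death _

lemma ids_append (D E : VLD) : ids (D ++ E) = ids D ++ ids E := by
  simp [ids]

lemma relabel_append (f : ℕ → ℕ) (D E : VLD) : relabel f (D ++ E) = relabel f D ++ relabel f E :=
  List.map_append ..

lemma relabel_eq_self_of_ids_eq_nil {E : VLD} (hE : ids E = []) (f : ℕ → ℕ) :
    relabel f E = E := by
  simp only [ids, List.filterMap_eq_nil_iff, List.mem_flatten] at hE
  conv_rhs => rw [← List.map_id E]
  refine List.map_congr_left fun c hc => ?_
  conv_rhs => rw [← List.map_id c]
  refine List.map_congr_left fun s hs => ?_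
  cases s with
  | cross i b t => exact absurd (hE _ ⟨c, hc, hs⟩) (by simp)
  | star => rfl

lemma RMove.append_right {D D' E : VLD} (hE : ids E = []) (h : RMove D D') :
    RMove (D ++ E) (D' ++ E) := by
  have fresh {i : ℕ} {F : VLD} (hi : i ∉ ids F) : i ∉ ids (F ++ E) := by simpa [ids_append, hE]
  cases h with
  | perm h => exact .perm (h.append_right E)
  | rot a w D h => exact .rot a w (D ++ E) h
  | relabel f hf D =>
    simpa [relabel_append, relabel_eq_self_of_ids_eq_nil hE] using RMove.relabel f hf (D ++ E)
  | r1 c b b' s hb x y D hfresh => exact .r1 c b b' s hb x y (D ++ E) (fresh hfresh)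
  | r2_same c d b s P hP hcd x y z D hfc hfd =>
    exact .r2_same c d b s P hP hcd x y z (D ++ E) (fresh hfc) (fresh hfd)
  | r2_diff c d b s P hP hcd x y u v D hfc hfd =>
    exact .r2_diff c d b s P hP hcd x y u v (D ++ E) (fresh hfc) (fresh hfd)
  | r3_1 a1 a2 b1 b2 c1 c2 h x y z w D => exact .r3_1 a1 a2 b1 b2 c1 c2 h x y z w (D ++ E)
  | r3_2 a1 a2 b1 b2 c1 c2 h x y z u v D => exact .r3_2 a1 a2 b1 b2 c1 c2 h x y z u v (D ++ E)
  | r3_3 a1 a2 b1 b2 c1 c2 h x y u v t w D =>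
    exact .r3_3 a1 a2 b1 b2 c1 c2 h x y u v t w (D ++ E)

lemma LStep.append_right {l : Lab} {D D' E : VLD} (hE : ids E = []) (h : LStep l D D') :
    LStep l (D ++ E) (D' ++ E) := by
  cases h with
  | rmoveF h => exact .rmoveF (h.append_right hE)
  | rmoveB h => exact .rmoveB (h.append_right hE)
  | saddle_merge x y z D h => exact .saddle_merge x y z (D ++ E) h
  | saddle_split x y z D h => exact .saddle_split x y z (D ++ E) h
  | birth D => exact .birth _
  | death D => exact .death _

lemma IsMovie.map {g : VLD → VLD} (hg : ∀ {l D D'}, LStep l D D' → LStep l (g D) (g D')) :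
    ∀ {D D' : VLD} {m : List (Lab × VLD)}, IsMovie D m D' →
      IsMovie (g D) (m.map fun p => (p.1, g p.2)) (g D')
  | _, _, [], h => congrArg g h
  | _, _, _ :: _, ⟨hs, hm⟩ => ⟨hg hs, IsMovie.map hg hm⟩

lemma IsMovie.append {D D' D'' : VLD} {m m' : List (Lab × VLD)} :
    IsMovie D m D' → IsMovie D' m' D'' → IsMovie D (m ++ m') D'' := by
  induction m generalizing D with
  | nil => rintro rfl h'; exact h'
  | cons p m ih => exact fun ⟨hs, hm⟩ h' => ⟨hs, ih hm h'⟩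

lemma countLab_map (g : VLD → VLD) (l : Lab) (m : List (Lab × VLD)) :
    countLab l (m.map fun p => (p.1, g p.2)) = countLab l m := by
  simp only [countLab, List.filter_map, List.length_map]
  rfl

lemma countLab_append (l : Lab) (m m' : List (Lab × VLD)) :
    countLab l (m ++ m') = countLab l m + countLab l m' := by
  simp [countLab]

lemma countLab_nil (l : Lab) : countLab l [] = 0 := rfl

lemma countLab_cons (l l' : Lab) (D : VLD) (m : List (Lab × VLD)) :
    countLab l ((l', D) :: m) = (if l' == l then 1 else 0) + countLab l m := by
  simp only [countLab, List.filter_cons]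
  split <;> simp +arith

lemma Concordant.map {g : VLD → VLD} (hg : ∀ {l D D'}, LStep l D D' → LStep l (g D) (g D'))
    {D D' : VLD} (h : Concordant D D') : Concordant (g D) (g D') := by
  obtain ⟨m, hm, hc⟩ := h
  exact ⟨_, hm.map hg, by simpa only [countLab_map] using hc⟩

lemma delStar_longDiagram {w : List Sym} (hw : Sym.star ∉ w) :
    delStar (longDiagram w) = closure w := by
  simp [longDiagram, closure, delStar, noStar_eq_self hw]

lemma roundSlice_closure_of_longSlice {w : List Sym} (hw : Sym.star ∉ w) (h : LongSlice w) :
    RoundSlice (closure w) := by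
  have h' := h.map LStep.delStar
  rwa [delStar_longDiagram hw, delStar_longDiagram List.not_mem_nil] at h'

lemma longSlice_of_roundSlice_closure {w : List Sym} (hw : Sym.star ∉ w)
    (h : RoundSlice (closure w)) : LongSlice w := by
  obtain ⟨m, hm, hc⟩ := h
  have hsplit : LStep .saddle (longDiagram w) [[.star], w] := by
    simpa [longDiagram] using LStep.saddle_split [.star] w [] [] hw
  have hswap : LStep .rmove [[.star], w] (closure w ++ [[.star]]) :=
    .rmoveF (.perm (.swap _ _ _))
  have hcarry := hm.map (g := (· ++ [[.star]])) (LStep.append_right rfl)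
  have hdeath : LStep .death ([[]] ++ [[.star]]) (longDiagram []) := .death _
  refine ⟨(.saddle, _) :: (.rmove, _) ::
    ((m.map fun p => (p.1, p.2 ++ [[.star]])) ++ [(.death, _)]),
    ⟨hsplit, hswap, hcarry.append ⟨hdeath, rfl⟩⟩, ?_⟩
  simp +decide only [countLab_cons, countLab_append, countLab_map (· ++ [[Sym.star]]),
    countLab_nil, if_true, if_false]
  omega

theorem longSlice_iff_closure_slice_general (w : List Sym)
    (hstar : Sym.star ∉ w) :
    LongSlice w ↔ RoundSlice (closure w) :=
  ⟨roundSlice_closure_of_longSlice hstar, longSlice_of_roundSlice_closure hstar⟩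

/-- **Lemma 3.3.** A long virtual knot `K` is virtually slice if and only if its
closure `K̄` is virtually slice. -/
theorem longSlice_iff_closure_slice (w : List Sym) (hwf : WF (longDiagram w))
    (hstar : Sym.star ∉ w) :
    LongSlice w ↔ RoundSlice (closure w) :=
  longSlice_iff_closure_slice_general w hstar

end VKnot
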